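/- arXiv:2103.09549 — 6 statements merged into one kernel-verified Lean document; each statement's English description precedes it below -/
import Mathlib

section
/- Let D be a triangulated category with shift functor Σ, and let (T,F) be a pair of classes of objects of D, each closed under isomorphism, satisfying (STP1) and (STP2). Then the following are equivalent: (1) Hom_D(T, Σ⁻¹F) = 0 for all T ∈ T and F ∈ F; (2) T is closed under positive shift, i.e. ΣT ∈ T for every T ∈ T; (3) F is closed under negative shift, i.e. Σ⁻¹F ∈ F for every F ∈ F. -/
/-!
Since `Σ` is an autoequivalence, `Hom(A, Σ⁻¹B) ≅ Hom(ΣA, B)`, so (STP3) says `Hom(ΣT, F) = 0`;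
it therefore follows from (STP2) once `ΣT ⊆ T`, and likewise once `Σ⁻¹F ⊆ F`.
Conversely, for `X ∈ T` decompose `ΣX` by (STP1) as `A → ΣX → B → ΣA`. The map `ΣX → B`
vanishes by (STP3), so `𝟙_B` factors through `ΣA → B`, which vanishes too: `B = 0` and
`ΣX ≅ A ∈ T`. Dually, decomposing `Σ⁻¹Y` for `Y ∈ F` forces the `T`-part to vanish.
-/

open CategoryTheory Limits Pretriangulated

universe v u

variable (D : Type u) [Category.{v} D] [HasZeroObject D] [HasShift D ℤ]
  [Preadditive D] [∀ n : ℤ, (shiftFunctor D n).Additive] [Pretriangulated D]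

/-- A class of objects closed under isomorphisms. -/
def IsoClosed (S : Set D) : Prop := ∀ ⦃X Y : D⦄, (X ≅ Y) → X ∈ S → Y ∈ S

/-- (STP1): every object sits in a distinguished triangle with first term in `T`
and third term in `F`. -/
def STP1 (T F : Set D) : Prop :=
  ∀ X : D, ∃ (A B : D) (f : A ⟶ X) (g : X ⟶ B) (h : B ⟶ A⟦(1 : ℤ)⟧),
    Triangle.mk f g h ∈ (distTriang D) ∧ A ∈ T ∧ B ∈ F

/-- (STP2): `Hom(T, F) = 0`. -/
def STP2 (T F : Set D) : Prop :=
  ∀ A ∈ T, ∀ B ∈ F, ∀ f : A ⟶ B, f = 0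

/-- (STP3): `Hom(T, Σ⁻¹ F) = 0`. -/
def STP3 (T F : Set D) : Prop :=
  ∀ A ∈ T, ∀ B ∈ F, ∀ f : A ⟶ B⟦(-1 : ℤ)⟧, f = 0

/-- An `s`-torsion pair in a triangulated category: a pair of iso-closed classes
satisfying (STP1), (STP2) and (STP3). -/
def IsSTorsionPair (T F : Set D) : Prop :=
  IsoClosed D T ∧ IsoClosed D F ∧ STP1 D T F ∧ STP2 D T F ∧ STP3 D T F

section

variable {D}

lemma shift_one_hom_eq_zero_iff {A B : D} :
    (∀ r : A⟦(1 : ℤ)⟧ ⟶ B, r = 0) ↔ ∀ f : A ⟶ B⟦(-1 : ℤ)⟧, f = 0 := by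
  let e := (shiftEquiv D (1 : ℤ)).toAdjunction.homEquiv A B
  have he : e 0 = 0 := by simp [e, Adjunction.homEquiv_unit]
  refine ⟨fun h f => ?_, fun h r => e.injective ?_⟩
  · exact (e.apply_symm_apply f).symm.trans ((congrArg e (h (e.symm f))).trans he)
  · exact (h (e r)).trans he.symm

lemma stp3_iff_shift_hom_eq_zero {T F : Set D} :
    STP3 D T F ↔ ∀ A ∈ T, ∀ B ∈ F, ∀ r : A⟦(1 : ℤ)⟧ ⟶ B, r = 0 := by
  simp only [STP3, shift_one_hom_eq_zero_iff]

lemma Triangle.isZero₃_of_mor₂_eq_zero {T : Triangle D} (hT : T ∈ distTriang D)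
    (h₂ : T.mor₂ = 0) (h : ∀ r : T.obj₁⟦(1 : ℤ)⟧ ⟶ T.obj₃, r = 0) : IsZero T.obj₃ := by
  obtain ⟨r, hr⟩ := Triangle.yoneda_exact₃ T hT (𝟙 T.obj₃) (by rw [h₂, zero_comp])
  rw [IsZero.iff_id_eq_zero, hr, h r, comp_zero]

lemma Triangle.isZero₁_of_mor₁_eq_zero {T : Triangle D} (hT : T ∈ distTriang D)
    (h₁ : T.mor₁ = 0) (h : ∀ t : T.obj₁ ⟶ T.obj₃⟦(-1 : ℤ)⟧, t = 0) : IsZero T.obj₁ := by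
  obtain ⟨t, ht⟩ := Triangle.coyoneda_exact₂ _ (inv_rot_of_distTriang T hT) (𝟙 T.obj₁)
    (by rw [Triangle.invRotate_mor₂, h₁]; exact comp_zero)
  rw [IsZero.iff_id_eq_zero, ht, h t]
  exact zero_comp

lemma stp3_iff_forall_shift_mem_left {T F : Set D} (hTiso : IsoClosed D T)
    (h1 : STP1 D T F) (h2 : STP2 D T F) :
    STP3 D T F ↔ ∀ X ∈ T, X⟦(1 : ℤ)⟧ ∈ T := by
  rw [stp3_iff_shift_hom_eq_zero]
  refine ⟨fun h3 X hX => ?_, fun hT A hA B hB r => h2 _ (hT A hA) _ hB r⟩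
  obtain ⟨A, B, f, g, _, hdt, hA, hB⟩ := h1 (X⟦(1 : ℤ)⟧)
  have hBzero : IsZero B :=
    Triangle.isZero₃_of_mor₂_eq_zero hdt (h3 X hX B hB g) (h3 A hA B hB)
  have : IsIso f := (Triangle.isZero₃_iff_isIso₁ _ hdt).1 hBzero
  exact hTiso (asIso f) hA

lemma stp3_iff_forall_shift_neg_mem_right {T F : Set D} (hFiso : IsoClosed D F)
    (h1 : STP1 D T F) (h2 : STP2 D T F) :
    STP3 D T F ↔ ∀ X ∈ F, X⟦(-1 : ℤ)⟧ ∈ F := by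
  refine ⟨fun h3 Y hY => ?_, fun hF A hA B hB f => h2 _ hA _ (hF B hB) f⟩
  obtain ⟨A, B, f, g, _, hdt, hA, hB⟩ := h1 (Y⟦(-1 : ℤ)⟧)
  have hAzero : IsZero A :=
    Triangle.isZero₁_of_mor₁_eq_zero hdt (h3 A hA Y hY f) (h3 A hA B hB)
  have : IsIso g := (Triangle.isZero₁_iff_isIso₂ _ hdt).1 hAzero
  exact hFiso (asIso g).symm hB

end

/-- Lemma: "shift-closed".
Let `D` be a triangulated category with shift functor `Σ`, and let `(T, F)` be a pair of
iso-closed classes of objects of `D` satisfying (STP1) and (STP2).  Then the following are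
equivalent: (1) `Hom(T, Σ⁻¹F) = 0`; (2) `T` is closed under positive shift;
(3) `F` is closed under negative shift. -/
theorem stmt0 (T F : Set D)
    (hTiso : IsoClosed D T) (hFiso : IsoClosed D F)
    (h1 : STP1 D T F) (h2 : STP2 D T F) :
    (STP3 D T F ↔ ∀ X ∈ T, X⟦(1 : ℤ)⟧ ∈ T) ∧
    (STP3 D T F ↔ ∀ X ∈ F, X⟦(-1 : ℤ)⟧ ∈ F) :=
  ⟨stp3_iff_forall_shift_mem_left hTiso h1 h2, stp3_iff_forall_shift_neg_mem_right hFiso h1 h2⟩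
end

section
/- Let D be a triangulated category with shift functor Σ and let (T,F) be an s-torsion pair in D. Then the inclusion functor of the full subcategory of D on the objects of T admits a right adjoint, and the inclusion functor of the full subcategory of D on the objects of F admits a left adjoint. -/
/-!
The triangle `A → X → B → A⟦1⟧` given by (STP1) exhibits `A` as a coreflection of `X` into `T`
and `B` as a reflection of `X` into `F`. For `W ∈ T`, the long exact sequence of `Hom(W, -)`
makes `Hom(W, A) → Hom(W, X)` bijective, because its flanking terms `Hom(W, B⟦-1⟧)` and
`Hom(W, B)` vanish by (STP3) and (STP2). Dually, for `W ∈ F` the map `Hom(B, W) → Hom(X, W)` is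
bijective because `Hom(A, W)` and `Hom(A⟦1⟧, W) ≅ Hom(A, W⟦-1⟧)` vanish.
-/

open CategoryTheory Limits Pretriangulated

universe v u

variable (D : Type u) [Category.{v} D] [HasZeroObject D] [HasShift D ℤ]
  [Preadditive D] [∀ n : ℤ, (shiftFunctor D n).Additive] [Pretriangulated D]

namespace CategoryTheory

lemma Functor.isLeftAdjoint_of_forall_bijective {C E : Type*} [Category C] [Category E]
    {F : C ⥤ E} (h : ∀ X : E, ∃ (A : C) (f : F.obj A ⟶ X),
      ∀ W : C, Function.Bijective fun w : W ⟶ A => F.map w ≫ f) :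
    F.IsLeftAdjoint := by
  refine isLeftAdjoint_of_rightAdjointObjIsDefined_eq_top (top_unique fun X _ => ?_)
  obtain ⟨A, f, hf⟩ := h X
  exact RepresentableBy.isRepresentable
    { homEquiv := Equiv.ofBijective _ (hf _)
      homEquiv_comp := fun _ _ => by simp }

lemma Functor.isRightAdjoint_of_forall_bijective {C E : Type*} [Category C] [Category E]
    {F : C ⥤ E} (h : ∀ X : E, ∃ (B : C) (g : X ⟶ F.obj B),
      ∀ W : C, Function.Bijective fun k : B ⟶ W => g ≫ F.map k) :
    F.IsRightAdjoint := by
  refine isRightAdjoint_of_leftAdjointObjIsDefined_eq_top (top_unique fun X _ => ?_)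
  obtain ⟨B, g, hg⟩ := h X
  exact CorepresentableBy.isCorepresentable
    { homEquiv := Equiv.ofBijective _ (hg _)
      homEquiv_comp := fun _ _ => by simp }

lemma ObjectProperty.isLeftAdjoint_ι_of_forall_bijective {C : Type*} [Category C]
    {P : ObjectProperty C} (h : ∀ X : C, ∃ (A : C) (_ : P A) (f : A ⟶ X),
      ∀ W : C, P W → Function.Bijective fun w : W ⟶ A => w ≫ f) :
    P.ι.IsLeftAdjoint :=
  Functor.isLeftAdjoint_of_forall_bijective fun X =>
    let ⟨A, hA, f, hf⟩ := h X
    ⟨⟨A, hA⟩, f, fun W => (hf W.obj W.property).comp (P.fullyFaithfulι.map_bijective _ _)⟩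

lemma ObjectProperty.isRightAdjoint_ι_of_forall_bijective {C : Type*} [Category C]
    {P : ObjectProperty C} (h : ∀ X : C, ∃ (B : C) (_ : P B) (g : X ⟶ B),
      ∀ W : C, P W → Function.Bijective fun k : B ⟶ W => g ≫ k) :
    P.ι.IsRightAdjoint :=
  Functor.isRightAdjoint_of_forall_bijective fun X =>
    let ⟨B, hB, g, hg⟩ := h X
    ⟨⟨B, hB⟩, g, fun W => (hg W.obj W.property).comp (P.fullyFaithfulι.map_bijective _ _)⟩

lemma eq_zero_of_forall_hom_shift_neg_eq_zero {C : Type*} [Category C] [Preadditive C]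
    [HasShift C ℤ] [∀ n : ℤ, (shiftFunctor C n).Additive] {A B : C} {n : ℤ}
    (h : ∀ f : A ⟶ B⟦-n⟧, f = 0) (g : A⟦n⟧ ⟶ B) : g = 0 :=
  (Functor.map_eq_zero_iff (shiftFunctor C (-n))).1 <|
    (Preadditive.IsIso.comp_left_eq_zero (shiftShiftNeg A n).inv _).1 (h _)

namespace Pretriangulated

variable {C : Type*} [Category C] [HasZeroObject C] [HasShift C ℤ] [Preadditive C]
  [∀ n : ℤ, (shiftFunctor C n).Additive] [Pretriangulated C]

lemma bijective_comp_mor₁ {T : Triangle C} (hT : T ∈ distTriang C) {W : C}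
    (h₃ : ∀ g : W ⟶ T.obj₃, g = 0) (h₃' : ∀ g : W ⟶ T.obj₃⟦(-1 : ℤ)⟧, g = 0) :
    Function.Bijective fun w : W ⟶ T.obj₁ => w ≫ T.mor₁ := by
  refine ⟨(injective_iff_map_eq_zero (Preadditive.rightComp W T.mor₁)).2 fun w hw => ?_,
    fun x => ?_⟩
  · obtain ⟨u, rfl⟩ := Triangle.coyoneda_exact₂ _ (inv_rot_of_distTriang _ hT) w hw
    rw [h₃' u]
    exact zero_comp
  · obtain ⟨w, hw⟩ := Triangle.coyoneda_exact₂ _ hT x (h₃ _)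
    exact ⟨w, hw.symm⟩

lemma bijective_mor₂_comp {T : Triangle C} (hT : T ∈ distTriang C) {W : C}
    (h₁ : ∀ g : T.obj₁ ⟶ W, g = 0) (h₁' : ∀ g : T.obj₁⟦(1 : ℤ)⟧ ⟶ W, g = 0) :
    Function.Bijective fun k : T.obj₃ ⟶ W => T.mor₂ ≫ k := by
  refine ⟨(injective_iff_map_eq_zero (Preadditive.leftComp W T.mor₂)).2 fun k hk => ?_,
    fun x => ?_⟩
  · obtain ⟨l, rfl⟩ := Triangle.yoneda_exact₃ _ hT k hk
    rw [h₁' l]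
    exact comp_zero
  · obtain ⟨k, hk⟩ := Triangle.yoneda_exact₂ _ hT x (h₁ _)
    exact ⟨k, hk.symm⟩

end Pretriangulated

end CategoryTheory

/-- adjoints to the inclusions.
Let `(T, F)` be an `s`-torsion pair in `D`.  Then the inclusion of the full subcategory on
the objects of `T` admits a right adjoint (i.e. it is a left adjoint), and the inclusion of
the full subcategory on the objects of `F` admits a left adjoint (i.e. it is a right
adjoint). -/
theorem stmt3 (T F : Set D) (h : IsSTorsionPair D T F) :
    (ObjectProperty.ι (· ∈ T)).IsLeftAdjoint ∧
    (ObjectProperty.ι (· ∈ F)).IsRightAdjoint := by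
  obtain ⟨-, -, hTF, hHom, hHomShift⟩ := h
  constructor
  · refine ObjectProperty.isLeftAdjoint_ι_of_forall_bijective fun X => ?_
    obtain ⟨A, B, f, _, _, hdist, hA, hB⟩ := hTF X
    exact ⟨A, hA, f, fun W hW =>
      bijective_comp_mor₁ hdist (hHom W hW B hB) (hHomShift W hW B hB)⟩
  · refine ObjectProperty.isRightAdjoint_ι_of_forall_bijective fun X => ?_
    obtain ⟨A, B, _, g, _, hdist, hA, hB⟩ := hTF X
    exact ⟨B, hB, g, fun W hW => bijective_mor₂_comp hdist (hHom A hA W hW)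
      (eq_zero_of_forall_hom_shift_neg_eq_zero (hHomShift A hA W hW))⟩
end

section
/- Let D be a triangulated category with shift functor Σ and let (T',F') and (T,F) be s-torsion pairs in D with T' ⊆ T. Then: (1) every object M ∈ T fits into a distinguished triangle T₀ → M → H → ΣT₀ with T₀ ∈ T' and H ∈ T ∩ F'; (2) every object M ∈ F' fits into a distinguished triangle H → M → F₀ → ΣH with H ∈ T ∩ F' and F₀ ∈ F. Conversely, any object admitting such a triangle as in (1) lies in T, and any object admitting such a triangle as in (2) lies in F'. -/
open CategoryTheory Limits Pretriangulated

universe v u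

variable (D : Type u) [Category.{v} D] [HasZeroObject D] [HasShift D ℤ]
  [Preadditive D] [∀ n : ℤ, (shiftFunctor D n).Additive] [Pretriangulated D]

/-- `star X Y` is the class of objects `M` admitting a distinguished triangle
`A → M → B → ΣA` with `A ∈ X` and `B ∈ Y`. -/
def star (X Y : Set D) : Set D :=
  {M : D | ∃ (A B : D) (f : A ⟶ M) (g : M ⟶ B) (h : B ⟶ A⟦(1 : ℤ)⟧),
    Triangle.mk f g h ∈ (distTriang D) ∧ A ∈ X ∧ B ∈ Y}

/-!
Both torsion classes are determined by Hom-orthogonality: `M ∈ T` as soon as `Hom(M, F) = 0`,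
because in the (STP1)-triangle `A → M → B → ΣA` the map `M → B` vanishes, so `𝟙_B` factors
through `ΣA → B`, which vanishes by (STP3); dually for `F`. Each inclusion of the theorem is
then a Hom-vanishing statement, obtained from the long exact Hom-sequences of one triangle.
-/

section

variable {D}

omit [HasZeroObject D] [Pretriangulated D] in
lemma shift_one_hom_eq_zero {A B : D} (hz : ∀ f : A ⟶ B⟦(-1 : ℤ)⟧, f = 0)
    (g : A⟦(1 : ℤ)⟧ ⟶ B) : g = 0 :=
  have : (shiftEquiv D (1 : ℤ)).functor.Additive :=
    inferInstanceAs (shiftFunctor D (1 : ℤ)).Additive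
  let adj := (shiftEquiv D (1 : ℤ)).toAdjunction
  (adj.homEquiv A B).injective ((hz _).trans (adj.homAddEquiv_zero A B).symm)

namespace Triangle

variable {K : Triangle D} (hK : K ∈ distTriang D) {C : D}
include hK

lemma hom_obj₃_eq_zero (h₂ : ∀ f : K.obj₂ ⟶ C, f = 0)
    (h₁ : ∀ f : K.obj₁⟦(1 : ℤ)⟧ ⟶ C, f = 0) (f : K.obj₃ ⟶ C) : f = 0 := by
  obtain ⟨g, rfl⟩ := Triangle.yoneda_exact₃ K hK f (h₂ _)
  rw [h₁ g, comp_zero]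

lemma hom_obj₂_eq_zero (h₁ : ∀ f : K.obj₁ ⟶ C, f = 0)
    (h₃ : ∀ f : K.obj₃ ⟶ C, f = 0) (f : K.obj₂ ⟶ C) : f = 0 := by
  obtain ⟨g, rfl⟩ := Triangle.yoneda_exact₂ K hK f (h₁ _)
  rw [h₃ g, comp_zero]

lemma hom_to_obj₁_eq_zero (h₂ : ∀ f : C ⟶ K.obj₂, f = 0)
    (h₃ : ∀ f : C ⟶ K.obj₃⟦(-1 : ℤ)⟧, f = 0) (f : C ⟶ K.obj₁) : f = 0 := by
  obtain ⟨g, rfl⟩ := Triangle.coyoneda_exact₂ _ (inv_rot_of_distTriang K hK) f (h₂ _)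
  rw [h₃ g]
  exact zero_comp

lemma hom_to_obj₂_eq_zero (h₁ : ∀ f : C ⟶ K.obj₁, f = 0)
    (h₃ : ∀ f : C ⟶ K.obj₃, f = 0) (f : C ⟶ K.obj₂) : f = 0 := by
  obtain ⟨g, rfl⟩ := Triangle.coyoneda_exact₂ K hK f (h₃ _)
  rw [h₁ g, zero_comp]

end Triangle

namespace IsSTorsionPair

variable {T F : Set D} (h : IsSTorsionPair D T F)
include h

lemma mem_left_of_hom_eq_zero {M : D} (hM : ∀ B ∈ F, ∀ f : M ⟶ B, f = 0) : M ∈ T := by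
  obtain ⟨hT, -, stp1, -, stp3⟩ := h
  obtain ⟨A, B, f, g, w, hK, hA, hB⟩ := stp1 M
  have hB0 : IsZero B := by
    rw [IsZero.iff_id_eq_zero]
    exact Triangle.hom_obj₃_eq_zero hK (hM B hB)
      (shift_one_hom_eq_zero (stp3 A hA B hB)) _
  have : IsIso f := (Triangle.isZero₃_iff_isIso₁ _ hK).1 hB0
  exact hT (asIso f) hA

lemma mem_right_of_hom_eq_zero {M : D} (hM : ∀ A ∈ T, ∀ f : A ⟶ M, f = 0) : M ∈ F := by
  obtain ⟨-, hF, stp1, -, stp3⟩ := h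
  obtain ⟨A, B, f, g, w, hK, hA, hB⟩ := stp1 M
  have hA0 : IsZero A := by
    rw [IsZero.iff_id_eq_zero]
    exact Triangle.hom_to_obj₁_eq_zero hK (hM A hA) (stp3 A hA B hB) _
  have : IsIso g := (Triangle.isZero₁_iff_isIso₂ _ hK).1 hA0
  exact hF (asIso g).symm hB

end IsSTorsionPair

variable {T' F' T F : Set D}

lemma subset_star_torsion (h' : IsSTorsionPair D T' F') (h : IsSTorsionPair D T F)
    (hsub : T' ⊆ T) : T ⊆ star D T' (T ∩ F') := by
  intro M hM
  have ⟨_, _, stp1', _, _⟩ := h'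
  have ⟨_, _, _, stp2, stp3⟩ := h
  obtain ⟨A, B, f, g, w, hK, hA, hB⟩ := stp1' M
  refine ⟨A, B, f, g, w, hK, hA, h.mem_left_of_hom_eq_zero fun C hC => ?_, hB⟩
  exact Triangle.hom_obj₃_eq_zero hK (stp2 M hM C hC)
    (shift_one_hom_eq_zero (stp3 A (hsub hA) C hC))

lemma star_torsion_subset (h : IsSTorsionPair D T F) (hsub : T' ⊆ T) :
    star D T' (T ∩ F') ⊆ T := by
  rintro M ⟨A, B, f, g, w, hK, hA, hBT, -⟩
  have ⟨_, _, _, stp2, _⟩ := h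
  refine h.mem_left_of_hom_eq_zero fun C hC => ?_
  exact Triangle.hom_obj₂_eq_zero hK (stp2 A (hsub hA) C hC) (stp2 B hBT C hC)

lemma subset_star_torsionFree (h' : IsSTorsionPair D T' F') (h : IsSTorsionPair D T F)
    (hsub : T' ⊆ T) : F' ⊆ star D (T ∩ F') F := by
  intro M hM
  have ⟨_, _, _, stp2', _⟩ := h'
  have ⟨_, _, stp1, _, stp3⟩ := h
  obtain ⟨A, B, f, g, w, hK, hA, hB⟩ := stp1 M
  refine ⟨A, B, f, g, w, hK, ⟨hA, h'.mem_right_of_hom_eq_zero fun C hC => ?_⟩, hB⟩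
  exact Triangle.hom_to_obj₁_eq_zero hK (stp2' C hC M hM) (stp3 C (hsub hC) B hB)

lemma star_torsionFree_subset (h' : IsSTorsionPair D T' F') (h : IsSTorsionPair D T F)
    (hsub : T' ⊆ T) : star D (T ∩ F') F ⊆ F' := by
  rintro M ⟨A, B, f, g, w, hK, ⟨-, hAF'⟩, hB⟩
  have ⟨_, _, _, stp2', _⟩ := h'
  have ⟨_, _, _, stp2, _⟩ := h
  refine h'.mem_right_of_hom_eq_zero fun C hC => ?_
  exact Triangle.hom_to_obj₂_eq_zero hK (stp2' C hC A hAF') (stp2 C (hsub hC) B hB)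

end

/-- Lemma on hearts.
Let `(T', F')` and `(T, F)` be `s`-torsion pairs in `D` with `T' ⊆ T`.  Then an object lies
in `T` if and only if it admits a distinguished triangle `T₀ → M → H → ΣT₀` with `T₀ ∈ T'`
and `H ∈ T ∩ F'`, and an object lies in `F'` if and only if it admits a distinguished
triangle `H → M → F₀ → ΣH` with `H ∈ T ∩ F'` and `F₀ ∈ F`. -/
theorem stmt4 (T' F' T F : Set D)
    (h' : IsSTorsionPair D T' F') (h : IsSTorsionPair D T F) (hsub : T' ⊆ T) :
    T = star D T' (T ∩ F') ∧ F' = star D (T ∩ F') F :=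
  ⟨(subset_star_torsion h' h hsub).antisymm (star_torsion_subset h hsub),
    (subset_star_torsionFree h' h hsub).antisymm (star_torsionFree_subset h' h hsub)⟩
end

section
/- Let D be a triangulated category with shift functor Σ, let t₁ = (T₁,F₁) and t₂ = (T₂,F₂) be s-torsion pairs in D with T₁ ⊆ T₂, and set H = T₂ ∩ F₁. If (T,F) is an s-torsion pair in D with T₁ ⊆ T ⊆ T₂, then the pair (T ∩ F₁, T₂ ∩ F) is an s-torsion pair in H; that is, both classes are contained in H, every object H₀ ∈ H fits into a distinguished triangle X → H₀ → Y → ΣX with X ∈ T ∩ F₁ and Y ∈ T₂ ∩ F, Hom_D(X,Y) = 0 and Hom_D(X, Σ⁻¹Y) = 0 for all X ∈ T ∩ F₁ and Y ∈ T₂ ∩ F. -/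
open CategoryTheory Limits Pretriangulated

universe v u

variable (D : Type u) [Category.{v} D] [HasZeroObject D] [HasShift D ℤ]
  [Preadditive D] [∀ n : ℤ, (shiftFunctor D n).Additive] [Pretriangulated D]

/-!
Both classes of an `s`-torsion pair are determined by `Hom`-orthogonality: if `Hom(T, X) = 0`,
the approximation triangle `A → X → B → A⟦1⟧` makes `𝟙_A` factor through `B⟦-1⟧ → A`, which
vanishes by (STP3), so `A = 0` and `X ≅ B ∈ F`; dually for `T`. Hence `F ⊆ F₁` as `T₁ ⊆ T`, and for
`H₀` in the heart the `(T, F)`-triangle `X → H₀ → Y → X⟦1⟧` has `X ∈ F₁` (a map from `T₁` to `X`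
dies in `H₀ ∈ F₁`, so factors through `Y⟦-1⟧` with `Y ∈ F` and `T₁ ⊆ T`) and `Y ∈ T₂` (a map from
`Y` to `F₂` dies on `H₀ ∈ T₂`, so factors through `X⟦1⟧` with `X ∈ T ⊆ T₂`).
-/

lemma STP3.shift_hom_eq_zero {C : Type*} [Category C] [Preadditive C] [HasShift C ℤ]
    {T F : Set C} (h : STP3 C T F) {A B : C} (hA : A ∈ T) (hB : B ∈ F) (ψ : A⟦(1 : ℤ)⟧ ⟶ B) : ψ = 0 := by
  have := h A hA B hB ((shiftFunctorCompIsoId C (1 : ℤ) (-1) (by norm_num)).inv.app A ≫ ψ⟦-1⟧')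
  rwa [Preadditive.IsIso.comp_left_eq_zero, Functor.map_eq_zero_iff] at this

section

variable {D}

lemma eq_zero_of_comp_mor₁_eq_zero {T : Triangle D} (hT : T ∈ distTriang D) {W : D}
    (u : W ⟶ T.obj₁) (hu : u ≫ T.mor₁ = 0) (h : ∀ v : W ⟶ T.obj₃⟦(-1 : ℤ)⟧, v = 0) :
    u = 0 := by
  obtain ⟨v, rfl⟩ := Triangle.coyoneda_exact₂ _ (inv_rot_of_distTriang _ hT) u hu
  exact (congrArg (· ≫ _) (h v)).trans zero_comp

lemma eq_zero_of_mor₂_comp_eq_zero {T : Triangle D} (hT : T ∈ distTriang D) {W : D}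
    (w : T.obj₃ ⟶ W) (hw : T.mor₂ ≫ w = 0) (h : ∀ ψ : T.obj₁⟦(1 : ℤ)⟧ ⟶ W, ψ = 0) :
    w = 0 := by
  obtain ⟨ψ, rfl⟩ := Triangle.yoneda_exact₃ _ hT w hw
  rw [h ψ, comp_zero]

namespace IsSTorsionPair

variable {T F : Set D}

lemma mem_right_iff (h : IsSTorsionPair D T F) (X : D) :
    X ∈ F ↔ ∀ A ∈ T, ∀ f : A ⟶ X, f = 0 := by
  obtain ⟨-, hFiso, hstp1, hstp2, hstp3⟩ := h
  refine ⟨fun hX A hA f => hstp2 A hA X hX f, fun hX => ?_⟩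
  obtain ⟨A, B, f, g, δ, hdt, hA, hB⟩ := hstp1 X
  have hA0 : IsZero A := by
    rw [IsZero.iff_id_eq_zero]
    exact eq_zero_of_comp_mor₁_eq_zero hdt (𝟙 A)
      ((Category.id_comp f).trans (hX A hA f)) (hstp3 A hA B hB)
  have : IsIso g := (Triangle.isZero₁_iff_isIso₂ _ hdt).1 hA0
  exact hFiso (asIso g).symm hB

lemma mem_left_iff (h : IsSTorsionPair D T F) (X : D) :
    X ∈ T ↔ ∀ B ∈ F, ∀ f : X ⟶ B, f = 0 := by
  obtain ⟨hTiso, -, hstp1, hstp2, hstp3⟩ := h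
  refine ⟨fun hX B hB f => hstp2 X hX B hB f, fun hX => ?_⟩
  obtain ⟨A, B, f, g, δ, hdt, hA, hB⟩ := hstp1 X
  have hB0 : IsZero B := by
    rw [IsZero.iff_id_eq_zero]
    exact eq_zero_of_mor₂_comp_eq_zero hdt (𝟙 B)
      ((Category.comp_id g).trans (hX B hB g)) (hstp3.shift_hom_eq_zero hA hB)
  have : IsIso f := (Triangle.isZero₃_iff_isIso₁ _ hdt).1 hB0
  exact hTiso (asIso f) hA

lemma right_subset_of_left_subset {T' F' : Set D} (h : IsSTorsionPair D T F)
    (h' : STP2 D T' F') (hT : T ⊆ T') : F' ⊆ F :=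
  fun X hX => (h.mem_right_iff X).2 fun A hA f => h' A (hT hA) X hX f

end IsSTorsionPair

end

theorem stmt5 (T₁ F₁ T₂ F₂ T F : Set D)
    (h₁ : IsSTorsionPair D T₁ F₁) (h₂ : IsSTorsionPair D T₂ F₂)
    (h : IsSTorsionPair D T F)
    (hl : T₁ ⊆ T) (hr : T ⊆ T₂) :
    T ∩ F₁ ⊆ T₂ ∩ F₁ ∧
    T₂ ∩ F ⊆ T₂ ∩ F₁ ∧
    (∀ H₀ ∈ T₂ ∩ F₁, ∃ (X Y : D) (f : X ⟶ H₀) (g : H₀ ⟶ Y) (δ : Y ⟶ X⟦(1 : ℤ)⟧),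
      Triangle.mk f g δ ∈ (distTriang D) ∧ X ∈ T ∩ F₁ ∧ Y ∈ T₂ ∩ F) ∧
    STP2 D (T ∩ F₁) (T₂ ∩ F) ∧
    STP3 D (T ∩ F₁) (T₂ ∩ F) := by
  obtain ⟨-, -, hstp1, hstp2, hstp3⟩ := h
  have ⟨_, _, _, hstp2₁, _⟩ := h₁
  have ⟨_, _, _, hstp2₂, hstp3₂⟩ := h₂
  have hFF₁ : F ⊆ F₁ := h₁.right_subset_of_left_subset hstp2 hl
  refine ⟨Set.inter_subset_inter_left _ hr, Set.inter_subset_inter_right _ hFF₁,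
    fun H₀ ⟨hH₀T₂, hH₀F₁⟩ => ?_, fun A hA B hB => hstp2 A hA.1 B hB.2,
    fun A hA B hB => hstp3 A hA.1 B hB.2⟩
  obtain ⟨X, Y, f, g, δ, hdt, hX, hY⟩ := hstp1 H₀
  have hXF₁ : X ∈ F₁ := (h₁.mem_right_iff X).2 fun A hA u =>
    eq_zero_of_comp_mor₁_eq_zero hdt u (hstp2₁ A hA H₀ hH₀F₁ _)
      (hstp3 A (hl hA) Y hY)
  have hYT₂ : Y ∈ T₂ := (h₂.mem_left_iff Y).2 fun B hB w =>
    eq_zero_of_mor₂_comp_eq_zero hdt w (hstp2₂ H₀ hH₀T₂ B hB _)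
      (hstp3₂.shift_hom_eq_zero (hr hX) hB)
  exact ⟨X, Y, f, g, δ, hdt, ⟨hX, hXF₁⟩, ⟨hYT₂, hY⟩⟩
end

section
/- Let D be a triangulated category with shift functor Σ, let t₁ = (T₁,F₁) and t₂ = (T₂,F₂) be s-torsion pairs in D with T₁ ⊆ T₂, and set H = T₂ ∩ F₁. Suppose (X,Y) is a pair of subclasses of H such that every object H₀ ∈ H fits into a distinguished triangle X → H₀ → Y → ΣX with X ∈ X and Y ∈ Y, and Hom_D(X,Y) = 0 and Hom_D(X, Σ⁻¹Y) = 0 for all X ∈ X and Y ∈ Y. Then (T₁∗X, Y∗F₂) is an s-torsion pair in D satisfying T₁ ⊆ T₁∗X ⊆ T₂, where T₁∗X denotes the class of objects M admitting a distinguished triangle U → M → X → ΣU with U ∈ T₁ and X ∈ X, and Y∗F₂ denotes the class of objects M admitting a distinguished triangle Y → M → V → ΣY with Y ∈ Y and V ∈ F₂. -/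
open CategoryTheory Limits Pretriangulated

universe v u

variable (D : Type u) [Category.{v} D] [HasZeroObject D] [HasShift D ℤ]
  [Preadditive D] [∀ n : ℤ, (shiftFunctor D n).Additive] [Pretriangulated D]

/-!
Both halves of an s-torsion pair are recovered by orthogonality: `T` is the class of objects
with no maps to `F`, and `F` the class of objects with no maps from `T`, since in a
decomposition triangle of such an object one end is forced to vanish. The same holds for
`(X, Y)` inside `H`. Hom-vanishing for the glued pair follows from the long exact
Hom-sequences. For the decomposition of `M`, split `M` by `t₂` as `C → M → F`, then `C` by `t₁`
as `A → C → G`, and `G ∈ H` by `(X, Y)` as `X₀ → G → Y₀`. The fibre `N` of `C → G → Y₀` and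
the cone `W` of `N → C → M` are checked to satisfy the orthogonality conditions describing
`T₁ ∗ X` and `Y ∗ F₂`. This replaces the octahedral axiom, which a pretriangulated category
need not satisfy.
-/

set_option linter.unusedSectionVars false

section Triangles

variable {D}

lemma shift_hom_eq_zero {A B : D} (h : ∀ f : A ⟶ B⟦(-1 : ℤ)⟧, f = 0)
    (g : A⟦(1 : ℤ)⟧ ⟶ B) : g = 0 := by
  have := h ((shiftFunctorCompIsoId D (1 : ℤ) (-1) (by norm_num)).inv.app A ≫ g⟦(-1 : ℤ)⟧')
  apply (shiftFunctor D (-1 : ℤ)).map_injective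
  simpa using this

lemma yoneda_exact₁_of_distTriang {T : Triangle D}
    (hT : T ∈ distTriang D) {Z : D} (f : T.obj₁ ⟶ Z) (hf : T.mor₃ ≫ f⟦(1 : ℤ)⟧' = 0) :
    ∃ g : T.obj₂ ⟶ Z, f = T.mor₁ ≫ g := by
  obtain ⟨g, hg⟩ := Triangle.yoneda_exact₂ _ (rot_of_distTriang _ (rot_of_distTriang _ hT)) _ hf
  obtain ⟨g', rfl⟩ : ∃ g' : T.obj₂ ⟶ Z, g'⟦(1 : ℤ)⟧' = g :=
    (shiftFunctor D (1 : ℤ)).map_surjective g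
  refine ⟨-g', (shiftFunctor D (1 : ℤ)).map_injective ?_⟩
  rw [hg]
  simp only [Functor.map_comp, Functor.map_neg, Preadditive.comp_neg]
  exact Preadditive.neg_comp _ _

lemma hom_from_obj₂_eq_zero {T : Triangle D} (hT : T ∈ distTriang D) {Z : D}
    (h₁ : ∀ f : T.obj₁ ⟶ Z, f = 0) (h₃ : ∀ f : T.obj₃ ⟶ Z, f = 0) (f : T.obj₂ ⟶ Z) :
    f = 0 := by
  obtain ⟨g, rfl⟩ := Triangle.yoneda_exact₂ T hT f (h₁ _)
  rw [h₃ g, comp_zero]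

lemma hom_from_obj₃_eq_zero {T : Triangle D} (hT : T ∈ distTriang D) {Z : D}
    (h₁ : ∀ f : T.obj₁ ⟶ Z⟦(-1 : ℤ)⟧, f = 0) (h₂ : ∀ f : T.obj₂ ⟶ Z, f = 0)
    (f : T.obj₃ ⟶ Z) : f = 0 := by
  obtain ⟨g, rfl⟩ := Triangle.yoneda_exact₃ T hT f (h₂ _)
  rw [shift_hom_eq_zero h₁ g, comp_zero]

lemma hom_to_obj₂_eq_zero {T : Triangle D} (hT : T ∈ distTriang D) {S : D}
    (h₁ : ∀ f : S ⟶ T.obj₁, f = 0) (h₃ : ∀ f : S ⟶ T.obj₃, f = 0) (f : S ⟶ T.obj₂) :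
    f = 0 := by
  obtain ⟨g, rfl⟩ := Triangle.coyoneda_exact₂ T hT f (h₃ _)
  rw [h₁ g, zero_comp]

lemma hom_to_obj₁_eq_zero {T : Triangle D} (hT : T ∈ distTriang D) {S : D}
    (h₂ : ∀ f : S ⟶ T.obj₂, f = 0) (h₃ : ∀ f : S ⟶ T.obj₃⟦(-1 : ℤ)⟧, f = 0)
    (f : S ⟶ T.obj₁) : f = 0 :=
  hom_to_obj₂_eq_zero (inv_rot_of_distTriang T hT) h₃ h₂ f

-- `h₂` and `h₃` make the neighbours of `Hom(T.obj₁, Z)` in the long exact sequence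
-- `Hom(T.obj₃, Z) → Hom(T.obj₂, Z) → Hom(T.obj₁, Z) → Hom(T.obj₃, Z⟦1⟧) → Hom(T.obj₂, Z⟦1⟧)`
-- onto and injective respectively.
lemma hom_from_obj₁_eq_zero {T : Triangle D} (hT : T ∈ distTriang D) {Z : D}
    (h₂ : ∀ f : T.obj₂ ⟶ Z, ∃ g, f = T.mor₂ ≫ g)
    (h₃ : ∀ g : T.obj₃ ⟶ Z⟦(1 : ℤ)⟧, T.mor₂ ≫ g = 0 → g = 0) (f : T.obj₁ ⟶ Z) :
    f = 0 := by
  have hf : T.mor₃ ≫ f⟦(1 : ℤ)⟧' = 0 :=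
    h₃ _ (by rw [← Category.assoc, comp_distTriang_mor_zero₂₃ T hT, zero_comp])
  obtain ⟨g, rfl⟩ := yoneda_exact₁_of_distTriang hT f hf
  obtain ⟨g', rfl⟩ := h₂ g
  rw [← Category.assoc, comp_distTriang_mor_zero₁₂ T hT, zero_comp]

lemma hom_to_obj₃_eq_zero {T : Triangle D} (hT : T ∈ distTriang D) {S : D}
    (h₂ : ∀ f : S ⟶ T.obj₂, ∃ g, f = g ≫ T.mor₁)
    (h₁ : ∀ g : S ⟶ T.obj₁⟦(1 : ℤ)⟧, g ≫ T.mor₁⟦(1 : ℤ)⟧' = 0 → g = 0) (f : S ⟶ T.obj₃) :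
    f = 0 := by
  have hf : f ≫ T.mor₃ = 0 :=
    h₁ _ (by rw [Category.assoc, comp_distTriang_mor_zero₃₁ T hT, comp_zero])
  obtain ⟨g, rfl⟩ := Triangle.coyoneda_exact₃ T hT f hf
  obtain ⟨g', rfl⟩ := h₂ g
  rw [Category.assoc, comp_distTriang_mor_zero₁₂ T hT, comp_zero]

lemma mor₂_comp_eq_zero_iff {T : Triangle D} (hT : T ∈ distTriang D) {Z : D}
    (h₁ : ∀ f : T.obj₁ ⟶ Z, f = 0) (g : T.obj₃ ⟶ Z⟦(1 : ℤ)⟧) : T.mor₂ ≫ g = 0 ↔ g = 0 := by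
  refine ⟨fun hg => ?_, fun hg => by rw [hg, comp_zero]⟩
  obtain ⟨g', rfl⟩ := Triangle.yoneda_exact₃ T hT g hg
  obtain ⟨k, rfl⟩ := (shiftFunctor D (1 : ℤ)).map_surjective g'
  rw [h₁ k, Functor.map_zero, comp_zero]

lemma comp_shift_mor₁_eq_zero_iff {T : Triangle D} (hT : T ∈ distTriang D) {S : D}
    (h₃ : ∀ f : S ⟶ T.obj₃, f = 0) (g : S ⟶ T.obj₁⟦(1 : ℤ)⟧) :
    g ≫ T.mor₁⟦(1 : ℤ)⟧' = 0 ↔ g = 0 := by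
  refine ⟨fun hg => ?_, fun hg => by rw [hg, zero_comp]⟩
  obtain ⟨k, rfl⟩ := Triangle.coyoneda_exact₁ T hT g hg
  rw [h₃ k, zero_comp]

lemma hom_from_fiber_comp_eq_zero {A C G X₀ Y₀ N Z : D} {a : A ⟶ C} {b : C ⟶ G}
    {c : G ⟶ A⟦(1 : ℤ)⟧} {x : X₀ ⟶ G} {p : G ⟶ Y₀} {q : Y₀ ⟶ X₀⟦(1 : ℤ)⟧} {ν : N ⟶ C}
    {δ : Y₀ ⟶ N⟦(1 : ℤ)⟧} (hb : Triangle.mk a b c ∈ distTriang D)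
    (hp : Triangle.mk x p q ∈ distTriang D) (hbp : Triangle.mk ν (b ≫ p) δ ∈ distTriang D)
    (hA : ∀ f : A ⟶ Z, f = 0) (hX : ∀ f : X₀ ⟶ Z, f = 0) (f : N ⟶ Z) : f = 0 := by
  refine hom_from_obj₁_eq_zero hbp (fun (g : C ⟶ Z) => ?_)
    (fun (g : Y₀ ⟶ Z⟦(1 : ℤ)⟧) (hg : (b ≫ p) ≫ g = 0) => ?_) f
  · obtain ⟨g₁, rfl⟩ := Triangle.yoneda_exact₂ _ hb g (hA _)
    obtain ⟨g₂, rfl⟩ := Triangle.yoneda_exact₂ _ hp g₁ (hX _)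
    exact ⟨g₂, (Category.assoc _ _ _).symm⟩
  · refine (mor₂_comp_eq_zero_iff hp hX g).1 ((mor₂_comp_eq_zero_iff hb hA _).1 ?_)
    exact (Category.assoc b p g).symm.trans hg

lemma hom_to_cofiber_comp_eq_zero {N C Y₀ M F W S : D} {ν : N ⟶ C} {γ : C ⟶ Y₀}
    {δ : Y₀ ⟶ N⟦(1 : ℤ)⟧} {c : C ⟶ M} {m : M ⟶ F} {e : F ⟶ C⟦(1 : ℤ)⟧} {w : M ⟶ W}
    {d : W ⟶ N⟦(1 : ℤ)⟧} (hν : Triangle.mk ν γ δ ∈ distTriang D)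
    (hc : Triangle.mk c m e ∈ distTriang D) (hνc : Triangle.mk (ν ≫ c) w d ∈ distTriang D)
    (hY : ∀ f : S ⟶ Y₀, f = 0) (hF : ∀ f : S ⟶ F, f = 0) (f : S ⟶ W) : f = 0 := by
  refine hom_to_obj₃_eq_zero hνc (fun (g : S ⟶ M) => ?_)
    (fun (g : S ⟶ N⟦(1 : ℤ)⟧) (hg : g ≫ (ν ≫ c)⟦(1 : ℤ)⟧' = 0) => ?_) f
  · obtain ⟨g₁, rfl⟩ := Triangle.coyoneda_exact₂ _ hc g (hF _)
    obtain ⟨g₂, rfl⟩ := Triangle.coyoneda_exact₂ _ hν g₁ (hY _)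
    exact ⟨g₂, Category.assoc _ _ _⟩
  · refine (comp_shift_mor₁_eq_zero_iff hν hY g).1 ((comp_shift_mor₁_eq_zero_iff hc hF _).1 ?_)
    rw [Functor.map_comp, ← Category.assoc] at hg
    exact hg

end Triangles

open ZeroObject

section STorsionPairs

variable {D}

lemma STP2.mono {T F T' F' : Set D} (h : STP2 D T F) (hT : T' ⊆ T) (hF : F' ⊆ F) :
    STP2 D T' F' :=
  fun A hA B hB => h A (hT hA) B (hF hB)

lemma STP3.mono {T F T' F' : Set D} (h : STP3 D T F) (hT : T' ⊆ T) (hF : F' ⊆ F) :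
    STP3 D T' F' :=
  fun A hA B hB => h A (hT hA) B (hF hB)

lemma isoClosed_star (P Q : Set D) : IsoClosed D (star D P Q) := by
  rintro M M' e ⟨A, B, f, g, h, hT, hA, hB⟩
  refine ⟨A, B, f ≫ e.hom, e.inv ≫ g, h, isomorphic_distinguished _ hT _ ?_, hA, hB⟩
  exact Triangle.isoMk _ _ (Iso.refl A) e.symm (Iso.refl B)
    (show (f ≫ e.hom) ≫ e.inv = 𝟙 A ≫ f by simp)
    (show (e.inv ≫ g) ≫ 𝟙 B = e.inv ≫ g by simp)
    (show h ≫ (𝟙 A)⟦(1 : ℤ)⟧' = 𝟙 B ≫ h by simp)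

lemma subset_star_of_zero_mem {P Q : Set D} (hQ : (0 : D) ∈ Q) : P ⊆ star D P Q :=
  fun M hM => ⟨M, 0, 𝟙 M, 0, 0, contractible_distinguished M, hM, hQ⟩

lemma mem_left_of_mem_star {T F : Set D} (hT : IsoClosed D T) (h₃ : STP3 D T F) {M : D}
    (hM : M ∈ star D T F) (hMF : ∀ B ∈ F, ∀ f : M ⟶ B, f = 0) : M ∈ T := by
  obtain ⟨A, B, f, g, h, hTr, hA, hB⟩ := hM
  have hB0 : IsZero B := by
    rw [IsZero.iff_id_eq_zero]
    exact hom_from_obj₃_eq_zero hTr (h₃ A hA B hB) (hMF B hB) (𝟙 B)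
  have : IsIso f := (Triangle.isZero₃_iff_isIso₁ _ hTr).1 hB0
  exact hT (asIso f) hA

lemma mem_right_of_mem_star {T F : Set D} (hF : IsoClosed D F) (h₃ : STP3 D T F) {M : D}
    (hM : M ∈ star D T F) (hTM : ∀ A ∈ T, ∀ f : A ⟶ M, f = 0) : M ∈ F := by
  obtain ⟨A, B, f, g, h, hTr, hA, hB⟩ := hM
  have hA0 : IsZero A := by
    rw [IsZero.iff_id_eq_zero]
    exact hom_to_obj₁_eq_zero hTr (hTM A hA) (h₃ A hA B hB) (𝟙 A)
  have : IsIso g := (Triangle.isZero₁_iff_isIso₂ _ hTr).1 hA0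
  exact hF (asIso g).symm hB

lemma IsSTorsionPair.mem_left {T F : Set D} (h : IsSTorsionPair D T F) {M : D}
    (hMF : ∀ B ∈ F, ∀ f : M ⟶ B, f = 0) : M ∈ T :=
  mem_left_of_mem_star h.1 h.2.2.2.2 (h.2.2.1 M) hMF

lemma IsSTorsionPair.mem_right {T F : Set D} (h : IsSTorsionPair D T F) {M : D}
    (hTM : ∀ A ∈ T, ∀ f : A ⟶ M, f = 0) : M ∈ F :=
  mem_right_of_mem_star h.2.1 h.2.2.2.2 (h.2.2.1 M) hTM

lemma IsSTorsionPair.zero_mem_left {T F : Set D} (h : IsSTorsionPair D T F) : (0 : D) ∈ T :=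
  h.mem_left fun _ _ f => (isZero_zero D).eq_of_src f 0

lemma IsSTorsionPair.zero_mem_right {T F : Set D} (h : IsSTorsionPair D T F) :
    (0 : D) ∈ F :=
  h.mem_right fun _ _ f => (isZero_zero D).eq_of_tgt f 0

lemma IsSTorsionPair.star_subset_left {T F P Q : Set D} (h : IsSTorsionPair D T F)
    (hP : P ⊆ T) (hQ : Q ⊆ T) : star D P Q ⊆ T := by
  rintro M ⟨A, B, _, _, _, hM, hA, hB⟩
  exact h.mem_left fun Z hZ =>
    hom_from_obj₂_eq_zero hM (h.2.2.2.1 A (hP hA) Z hZ) (h.2.2.2.1 B (hQ hB) Z hZ)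

lemma stp2_star {P Q R S : Set D} (hPR : STP2 D P R) (hPS : STP2 D P S) (hQR : STP2 D Q R)
    (hQS : STP2 D Q S) : STP2 D (star D P Q) (star D R S) := by
  rintro M ⟨A, B, _, _, _, hM, hA, hB⟩ N ⟨C, E, _, _, _, hN, hC, hE⟩
  exact hom_from_obj₂_eq_zero hM (hom_to_obj₂_eq_zero hN (hPR A hA C hC) (hPS A hA E hE))
    (hom_to_obj₂_eq_zero hN (hQR B hB C hC) (hQS B hB E hE))

lemma stp3_star {P Q R S : Set D} (hPR : STP3 D P R) (hPS : STP3 D P S) (hQR : STP3 D Q R)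
    (hQS : STP3 D Q S) : STP3 D (star D P Q) (star D R S) := by
  rintro M ⟨A, B, _, _, _, hM, hA, hB⟩ N ⟨C, E, _, _, _, hN, hC, hE⟩
  have hN' := Triangle.shift_distinguished _ hN (-1)
  exact hom_from_obj₂_eq_zero hM (hom_to_obj₂_eq_zero hN' (hPR A hA C hC) (hPS A hA E hE))
    (hom_to_obj₂_eq_zero hN' (hQR B hB C hC) (hQS B hB E hE))

end STorsionPairs

section Gluing

variable {D}

lemma mem_star_torsion_of_hom_eq_zero {T₁ F₁ T₂ F₂ X Y : Set D}
    (h₁ : IsSTorsionPair D T₁ F₁) (h₂ : IsSTorsionPair D T₂ F₂) (h12 : T₁ ⊆ T₂) (hY : Y ⊆ F₁)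
    (hXiso : IsoClosed D X) (hXY : ∀ M ∈ T₂ ∩ F₁, M ∈ star D X Y) (hXY₃ : STP3 D X Y)
    {N : D} (hN : N ∈ T₂) (hNY : ∀ B ∈ Y, ∀ f : N ⟶ B, f = 0) : N ∈ star D T₁ X := by
  obtain ⟨-, -, stp1₁, -, stp3₁⟩ := h₁
  have ⟨_, _, _, stp2₂, stp3₂⟩ := h₂
  obtain ⟨A, B, f, g, h, hT, hA, hB⟩ := stp1₁ N
  have hBT₂ : B ∈ T₂ := h₂.mem_left fun Z hZ =>
    hom_from_obj₃_eq_zero hT (stp3₂ A (h12 hA) Z hZ) (stp2₂ N hN Z hZ)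
  have hBX : B ∈ X := mem_left_of_mem_star hXiso hXY₃ (hXY B ⟨hBT₂, hB⟩) fun Z hZ =>
    hom_from_obj₃_eq_zero hT (stp3₁ A hA Z (hY hZ)) (hNY Z hZ)
  exact ⟨A, B, f, g, h, hT, hA, hBX⟩

lemma mem_star_torsionFree_of_hom_eq_zero {T₁ F₁ T₂ F₂ X Y : Set D}
    (h₁ : IsSTorsionPair D T₁ F₁) (h₂ : IsSTorsionPair D T₂ F₂) (h12 : T₁ ⊆ T₂) (hX : X ⊆ T₂)
    (hYiso : IsoClosed D Y) (hXY : ∀ M ∈ T₂ ∩ F₁, M ∈ star D X Y) (hXY₃ : STP3 D X Y)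
    {W : D} (hTW : ∀ A ∈ T₁, ∀ f : A ⟶ W, f = 0) (hXW : ∀ A ∈ X, ∀ f : A ⟶ W, f = 0) :
    W ∈ star D Y F₂ := by
  obtain ⟨-, -, stp1₂, -, stp3₂⟩ := h₂
  obtain ⟨A, B, f, g, h, hT, hA, hB⟩ := stp1₂ W
  have hAF₁ : A ∈ F₁ := h₁.mem_right fun Z hZ =>
    hom_to_obj₁_eq_zero hT (hTW Z hZ) (stp3₂ Z (h12 hZ) B hB)
  have hAY : A ∈ Y := mem_right_of_mem_star hYiso hXY₃ (hXY A ⟨hA, hAF₁⟩) fun Z hZ =>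
    hom_to_obj₁_eq_zero hT (hXW Z hZ) (stp3₂ Z (hX hZ) B hB)
  exact ⟨A, B, f, g, h, hT, hAY, hB⟩

lemma stp1_star {T₁ F₁ T₂ F₂ X Y : Set D}
    (h₁ : IsSTorsionPair D T₁ F₁) (h₂ : IsSTorsionPair D T₂ F₂) (h12 : T₁ ⊆ T₂)
    (hX : X ⊆ T₂ ∩ F₁) (hY : Y ⊆ T₂ ∩ F₁) (hXiso : IsoClosed D X) (hYiso : IsoClosed D Y)
    (hXY : ∀ M ∈ T₂ ∩ F₁, M ∈ star D X Y) (hXY₂ : STP2 D X Y) (hXY₃ : STP3 D X Y) :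
    STP1 D (star D T₁ X) (star D Y F₂) := by
  have ⟨_, _, stp1₁, stp2₁, _⟩ := h₁
  have ⟨_, _, stp1₂, stp2₂, stp3₂⟩ := h₂
  intro M
  obtain ⟨C, F, c, m, e, hc, hC, hF⟩ := stp1₂ M
  obtain ⟨A, G, a, b, g, hb, hA, hG⟩ := stp1₁ C
  have hGT₂ : G ∈ T₂ := h₂.mem_left fun Z hZ =>
    hom_from_obj₃_eq_zero hb (stp3₂ A (h12 hA) Z hZ) (stp2₂ C hC Z hZ)
  obtain ⟨X₀, Y₀, x, p, q, hp, hX₀, hY₀⟩ := hXY G ⟨hGT₂, hG⟩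
  obtain ⟨N, ν, δ, hbp⟩ := distinguished_cocone_triangle₁ (b ≫ p)
  obtain ⟨W, w, d, hνc⟩ := distinguished_cocone_triangle (ν ≫ c)
  refine ⟨N, W, ν ≫ c, w, d, hνc, ?_, ?_⟩
  · refine mem_star_torsion_of_hom_eq_zero h₁ h₂ h12 (fun _ hZ => (hY hZ).2) hXiso hXY hXY₃
      (h₂.mem_left fun Z hZ => ?_) fun Z hZ => ?_
    · exact hom_from_fiber_comp_eq_zero hb hp hbp (stp2₂ A (h12 hA) Z hZ)
        (stp2₂ X₀ (hX hX₀).1 Z hZ)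
    · exact hom_from_fiber_comp_eq_zero hb hp hbp (stp2₁ A hA Z (hY hZ).2) (hXY₂ X₀ hX₀ Z hZ)
  · refine mem_star_torsionFree_of_hom_eq_zero h₁ h₂ h12 (fun _ hZ => (hX hZ).1) hYiso hXY
      hXY₃ (fun Z hZ => ?_) fun Z hZ => ?_
    · exact hom_to_cofiber_comp_eq_zero hbp hc hνc (stp2₁ Z hZ Y₀ (hY hY₀).2)
        (stp2₂ Z (h12 hZ) F hF)
    · exact hom_to_cofiber_comp_eq_zero hbp hc hνc (hXY₂ Z hZ Y₀ hY₀) (stp2₂ Z (hX hZ).1 F hF)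

end Gluing

/-- the map `Ψ` is well defined.
Let `t₁ = (T₁, F₁) ≤ t₂ = (T₂, F₂)` be `s`-torsion pairs in `D` and `H = T₂ ∩ F₁`.
If `(X, Y)` is an `s`-torsion pair in `H` (a pair of iso-closed subclasses of `H` such that
every object of `H` sits in a distinguished triangle with ends in `X` and `Y`, with
`Hom(X, Y) = 0` and `Hom(X, Σ⁻¹Y) = 0`), then `(T₁ ∗ X, Y ∗ F₂)` is an `s`-torsion pair in
`D` with `T₁ ⊆ T₁ ∗ X ⊆ T₂`. -/
theorem stmt6 (T₁ F₁ T₂ F₂ : Set D)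
    (h₁ : IsSTorsionPair D T₁ F₁) (h₂ : IsSTorsionPair D T₂ F₂) (h12 : T₁ ⊆ T₂)
    (X Y : Set D) (hX : X ⊆ T₂ ∩ F₁) (hY : Y ⊆ T₂ ∩ F₁)
    (hXiso : IsoClosed D X) (hYiso : IsoClosed D Y)
    (hstp1 : ∀ H₀ ∈ T₂ ∩ F₁, ∃ (A B : D) (f : A ⟶ H₀) (g : H₀ ⟶ B) (δ : B ⟶ A⟦(1 : ℤ)⟧),
      Triangle.mk f g δ ∈ (distTriang D) ∧ A ∈ X ∧ B ∈ Y)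
    (hstp2 : STP2 D X Y) (hstp3 : STP3 D X Y) :
    IsSTorsionPair D (star D T₁ X) (star D Y F₂) ∧
    T₁ ⊆ star D T₁ X ∧ star D T₁ X ⊆ T₂ := by
  have ⟨_, _, _, stp2₁, stp3₁⟩ := h₁
  have ⟨_, _, _, stp2₂, stp3₂⟩ := h₂
  have hXT₂ : X ⊆ T₂ := fun _ hA => (hX hA).1
  have hYF₁ : Y ⊆ F₁ := fun _ hB => (hY hB).2
  have h0X : (0 : D) ∈ X := mem_left_of_mem_star hXiso hstp3
    (hstp1 0 ⟨h₂.zero_mem_left, h₁.zero_mem_right⟩) fun _ _ f => (isZero_zero D).eq_of_src f 0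
  refine ⟨⟨isoClosed_star _ _, isoClosed_star _ _,
    stp1_star h₁ h₂ h12 hX hY hXiso hYiso hstp1 hstp2 hstp3, ?_, ?_⟩,
    subset_star_of_zero_mem h0X, h₂.star_subset_left h12 hXT₂⟩
  · exact stp2_star (stp2₁.mono subset_rfl hYF₁) (stp2₂.mono h12 subset_rfl) hstp2
      (stp2₂.mono hXT₂ subset_rfl)
  · exact stp3_star (stp3₁.mono subset_rfl hYF₁) (stp3₂.mono h12 subset_rfl) hstp3
      (stp3₂.mono hXT₂ subset_rfl)
end

section
/- Let k be a field, let Λ be a finite-dimensional k-algebra, and let (T,F) be a torsion pair in mod Λ. Then the following are equivalent: (1) Ext¹_Λ(T,F) = 0 for all T ∈ T and F ∈ F; (2) T and F are Serre subcategories of mod Λ, i.e. T is closed under submodules and F is closed under quotient modules (both T and F are automatically closed under quotients and submodules respectively, being torsion and torsion-free classes). -/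
/-!
Orthogonality alone makes `T` closed under quotients and `F` closed under submodules.
If extensions of `T` by `F` split: for `N ≤ X ∈ T` with torsion part `N'`, the sequence
`0 → N/N' → X/N' → X/N → 0` splits, so `N/N' ∈ F` is a quotient of `X ∈ T` and vanishes;
dually, for `Y ∈ F` the torsion part `K` of `Y/N` splits off its preimage in `Y`, so `K`
embeds in `Y` and vanishes. Conversely, if `T` is closed under submodules and `F` under
quotients, the torsion part `Eₜ` of an extension `E` of `X ∈ T` by `Y ∈ F` meets `Y` in a
module of `T` embedding in `Y ∈ F`, and maps onto `X` since the cokernel is a quotient of both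
`X` and `E/Eₜ`; so `Eₜ ≅ X` gives the splitting.
-/

open CategoryTheory

structure IsTorsionPair {R : Type u} [Ring R] (T F : Set (ModuleCat.{u} R)) : Prop where
  finite_of_mem_torsion : ∀ M ∈ T, Module.Finite R M
  finite_of_mem_torsionFree : ∀ M ∈ F, Module.Finite R M
  torsion_iso : ∀ ⦃M N : ModuleCat.{u} R⦄, (M ≅ N) → M ∈ T → N ∈ T
  torsionFree_iso : ∀ ⦃M N : ModuleCat.{u} R⦄, (M ≅ N) → M ∈ F → N ∈ F
  hom_eq_zero : ∀ M ∈ T, ∀ N ∈ F, ∀ f : M →ₗ[R] N, f = 0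
  exists_torsion_submodule : ∀ M : ModuleCat.{u} R, Module.Finite R M →
    ∃ N : Submodule R M, ModuleCat.of R N ∈ T ∧ ModuleCat.of R (M ⧸ N) ∈ F

def ExtOneVanishes {R : Type u} [Ring R] (T F : Set (ModuleCat.{u} R)) : Prop :=
  ∀ X ∈ T, ∀ Y ∈ F, ∀ (E : ModuleCat.{u} R) (f : Y →ₗ[R] E) (g : E →ₗ[R] X),
    Function.Injective f → Function.Surjective g → Function.Exact f g →
    ∃ s : X →ₗ[R] E, g ∘ₗ s = LinearMap.id

variable {R : Type u} [Ring R] {T F : Set (ModuleCat.{u} R)}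
  {X Y E : Type u} [AddCommGroup X] [Module R X] [AddCommGroup Y] [Module R Y]
  [AddCommGroup E] [Module R E]

open LinearMap Submodule

theorem IsTorsionPair.mem_torsion_of_subsingleton_quotient (h : IsTorsionPair T F)
    {N : Submodule R X} (hN : ModuleCat.of R N ∈ T) [Subsingleton (X ⧸ N)] :
    ModuleCat.of R X ∈ T :=
  h.torsion_iso
    (LinearEquiv.ofTop N (Submodule.Quotient.subsingleton_iff.mp ‹_›)).toModuleIso hN

theorem IsTorsionPair.mem_torsionFree_of_subsingleton (h : IsTorsionPair T F)
    {N : Submodule R X} [Subsingleton N] (hN : ModuleCat.of R (X ⧸ N) ∈ F) :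
    ModuleCat.of R X ∈ F :=
  h.torsionFree_iso (quotEquivOfEqBot N (subsingleton_iff_eq_bot.mp ‹_›)).toModuleIso hN

theorem IsTorsionPair.subsingleton_of_surjective (h : IsTorsionPair T F)
    (hX : ModuleCat.of R X ∈ T) (hY : ModuleCat.of R Y ∈ F) {f : X →ₗ[R] Y}
    (hf : Function.Surjective f) : Subsingleton Y := by
  have hf0 : f = 0 := h.hom_eq_zero _ hX _ hY f
  refine ⟨fun a b => ?_⟩
  obtain ⟨x, rfl⟩ := hf a
  obtain ⟨x', rfl⟩ := hf b
  simp [hf0]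

theorem IsTorsionPair.subsingleton_of_injective (h : IsTorsionPair T F)
    (hX : ModuleCat.of R X ∈ T) (hY : ModuleCat.of R Y ∈ F) {f : X →ₗ[R] Y}
    (hf : Function.Injective f) : Subsingleton X :=
  ⟨fun a b => hf (by simp [h.hom_eq_zero _ hX _ hY f])⟩

theorem IsTorsionPair.subsingleton_of_range_le (h : IsTorsionPair T F)
    (hX : ModuleCat.of R X ∈ T) (hY : ModuleCat.of R Y ∈ F) {φ : X →ₗ[R] E}
    (hφ : Function.Injective φ) {f : Y →ₗ[R] E} (hf : Function.Injective f)
    (hle : range φ ≤ range f) : Subsingleton X :=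
  have hmem : ∀ x, φ x ∈ range f := fun x => hle (mem_range_self φ x)
  h.subsingleton_of_injective hX hY
    (f := (LinearEquiv.ofInjective f hf).symm ∘ₗ φ.codRestrict (range f) hmem)
    ((LinearEquiv.ofInjective f hf).symm.injective.comp ((injective_codRestrict_iff hmem).mpr hφ))

theorem IsTorsionPair.mem_torsion_of_surjective (h : IsTorsionPair T F)
    (hX : ModuleCat.of R X ∈ T) {f : X →ₗ[R] Y} (hf : Function.Surjective f) :
    ModuleCat.of R Y ∈ T := by
  have := h.finite_of_mem_torsion _ hX
  obtain ⟨N, hN, hYN⟩ :=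
    h.exists_torsion_submodule (ModuleCat.of R Y) (Module.Finite.of_surjective f hf)
  have := h.subsingleton_of_surjective hX hYN (f := N.mkQ ∘ₗ f) ((mkQ_surjective N).comp hf)
  exact h.mem_torsion_of_subsingleton_quotient hN

theorem IsTorsionPair.mem_torsionFree_of_injective (h : IsTorsionPair T F) [Module.Finite R X]
    (hY : ModuleCat.of R Y ∈ F) {f : X →ₗ[R] Y} (hf : Function.Injective f) :
    ModuleCat.of R X ∈ F := by
  obtain ⟨N, hN, hXN⟩ := h.exists_torsion_submodule (ModuleCat.of R X) ‹_›
  have := h.subsingleton_of_injective hN hY (f := f ∘ₗ N.subtype) (hf.comp N.injective_subtype)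
  exact h.mem_torsionFree_of_subsingleton hXN

theorem ExtOneVanishes.exists_leftInverse (hext : ExtOneVanishes T F)
    (hY : ModuleCat.of R Y ∈ F) {f : Y →ₗ[R] E} (hf : Function.Injective f)
    (hE : ModuleCat.of R (E ⧸ range f) ∈ T) :
    ∃ l : E →ₗ[R] Y, l ∘ₗ f = LinearMap.id := by
  have hexact := exact_map_mkQ_range f
  have hsurj := mkQ_surjective (range f)
  exact ((hexact.split_tfae hf hsurj).out 0 1).mp
    (hext _ hE _ hY (ModuleCat.of R E) f _ hf hsurj hexact)

theorem ExtOneVanishes.exists_rightInverse (hext : ExtOneVanishes T F)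
    (hX : ModuleCat.of R X ∈ T) {g : E →ₗ[R] X} (hg : Function.Surjective g)
    (hK : ModuleCat.of R (ker g) ∈ F) : ∃ s : X →ₗ[R] E, g ∘ₗ s = LinearMap.id :=
  hext _ hX _ hK (ModuleCat.of R E) _ g (injective_subtype _) hg (exact_subtype_ker_map g)

theorem ExtOneVanishes.submodule_mem_torsion [IsNoetherianRing R] (hext : ExtOneVanishes T F)
    (h : IsTorsionPair T F) (hX : ModuleCat.of R X ∈ T) (N : Submodule R X) :
    ModuleCat.of R N ∈ T := by
  have := h.finite_of_mem_torsion _ hX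
  obtain ⟨N', hN', hNN'⟩ := h.exists_torsion_submodule (ModuleCat.of R N) inferInstance
  set A := N'.map N.subtype
  have hker : N' = ker (A.mkQ ∘ₗ N.subtype) := by
    rw [ker_comp, ker_mkQ, comap_map_eq_of_injective N.injective_subtype]
  let ι : N ⧸ N' →ₗ[R] X ⧸ A := N'.liftQ (A.mkQ ∘ₗ N.subtype) hker.le
  have hι : Function.Injective ι := ker_eq_bot.mp (ker_liftQ_eq_bot' _ _ hker)
  have hcoker : ModuleCat.of R ((X ⧸ A) ⧸ range ι) ∈ T :=
    h.mem_torsion_of_surjective hX (f := (range ι).mkQ ∘ₗ A.mkQ)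
      ((mkQ_surjective _).comp (mkQ_surjective A))
  obtain ⟨l, hl⟩ := hext.exists_leftInverse hNN' hι hcoker
  have := h.subsingleton_of_surjective hX hNN' (f := l ∘ₗ A.mkQ)
    ((surjective_of_comp_eq_id ι l hl).comp (mkQ_surjective A))
  exact h.mem_torsion_of_subsingleton_quotient hN'

theorem ExtOneVanishes.quotient_mem_torsionFree [IsNoetherianRing R]
    (hext : ExtOneVanishes T F) (h : IsTorsionPair T F) (hY : ModuleCat.of R Y ∈ F)
    (N : Submodule R Y) : ModuleCat.of R (Y ⧸ N) ∈ F := by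
  have := h.finite_of_mem_torsionFree _ hY
  obtain ⟨K, hK, hQK⟩ := h.exists_torsion_submodule (ModuleCat.of R (Y ⧸ N)) inferInstance
  set P := K.comap N.mkQ
  let π : P →ₗ[R] K := N.mkQ.restrict fun _ hx => hx
  have hπ : Function.Surjective π := by
    rintro ⟨q, hq⟩
    obtain ⟨y, rfl⟩ := N.mkQ_surjective q
    exact ⟨⟨y, hq⟩, rfl⟩
  have hker : ModuleCat.of R (ker π) ∈ F :=
    h.mem_torsionFree_of_injective hY (f := P.subtype ∘ₗ (ker π).subtype)
      (P.injective_subtype.comp (injective_subtype _))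
  obtain ⟨s, hs⟩ := hext.exists_rightInverse hK hπ hker
  have := h.subsingleton_of_injective hK hY (f := P.subtype ∘ₗ s)
    (P.injective_subtype.comp (injective_of_comp_eq_id s π hs))
  exact h.mem_torsionFree_of_subsingleton hQK

theorem IsTorsionPair.extOneVanishes (h : IsTorsionPair T F)
    (hT : ∀ M ∈ T, ∀ N : Submodule R M, ModuleCat.of R N ∈ T)
    (hF : ∀ M ∈ F, ∀ N : Submodule R M, ModuleCat.of R (M ⧸ N) ∈ F) :
    ExtOneVanishes T F := by
  intro X hX Y hY E f g hf hg hfg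
  have := h.finite_of_mem_torsion _ hX
  have := h.finite_of_mem_torsionFree _ hY
  obtain ⟨Et, hEt, hEEt⟩ := h.exists_torsion_submodule E (Module.Finite.of_exact hfg hg)
  set γ := g ∘ₗ Et.subtype
  have hγ_inj : Function.Injective γ := by
    have hle : range (Et.subtype ∘ₗ (ker γ).subtype) ≤ range f := by
      rintro _ ⟨x, rfl⟩
      exact (hfg _).mp x.2
    have := h.subsingleton_of_range_le (hT _ hEt _) hY
      (Et.injective_subtype.comp (injective_subtype _)) hf hle
    exact ker_eq_bot.mp (subsingleton_iff_eq_bot.mp this)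
  have hγ_surj : Function.Surjective γ := by
    let μ : E ⧸ Et →ₗ[R] X ⧸ range γ :=
      Et.liftQ ((range γ).mkQ ∘ₗ g) fun e he =>
        (Submodule.Quotient.mk_eq_zero _).mpr ⟨⟨e, he⟩, rfl⟩
    have hμ : Function.Surjective μ :=
      .of_comp (g := Et.mkQ) ((mkQ_surjective _).comp hg)
    have := h.subsingleton_of_surjective hX
      (h.torsionFree_iso (μ.quotKerEquivOfSurjective hμ).toModuleIso (hF _ hEEt _))
      (mkQ_surjective (range γ))
    exact range_eq_top.mp (Submodule.Quotient.subsingleton_iff.mp this)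
  let e := LinearEquiv.ofBijective γ ⟨hγ_inj, hγ_surj⟩
  exact ⟨Et.subtype ∘ₗ e.symm, LinearMap.ext e.apply_symm_apply⟩

theorem IsTorsionPair.extOneVanishes_iff [IsNoetherianRing R] (h : IsTorsionPair T F) :
    ExtOneVanishes T F ↔
      (∀ M ∈ T, ∀ N : Submodule R M, ModuleCat.of R N ∈ T) ∧
      (∀ M ∈ F, ∀ N : Submodule R M, ModuleCat.of R (M ⧸ N) ∈ F) :=
  ⟨fun hext => ⟨fun _ hM N => hext.submodule_mem_torsion h hM N,
    fun _ hM N => hext.quotient_mem_torsionFree h hM N⟩,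
    fun hTF => h.extOneVanishes hTF.1 hTF.2⟩

/-- Proposition: `Ext¹`-vanishing and Serre subcategories.
Let `k` be a field, `Λ` a finite-dimensional `k`-algebra, and `(T, F)` a torsion pair in
`mod Λ`, the category of finite-dimensional (equivalently, finitely generated) right
`Λ`-modules, i.e. left `Λᵐᵒᵖ`-modules.  Then the following are equivalent:
(1) `Ext¹_Λ(T, F) = 0`, i.e. every short exact sequence `0 → Y → E → X → 0` with `X ∈ T`
and `Y ∈ F` splits; (2) `T` is closed under submodules and `F` is closed under quotient
modules (so that `T` and `F` are Serre subcategories). -/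
theorem stmt16 (k : Type u) [Field k] (Λ : Type u) [Ring Λ] [Algebra k Λ]
    [FiniteDimensional k Λ]
    (T F : Set (ModuleCat.{u} Λᵐᵒᵖ))
    -- all modules in `T` and `F` are objects of `mod Λ`
    (hTfin : ∀ M ∈ T, Module.Finite Λᵐᵒᵖ M)
    (hFfin : ∀ M ∈ F, Module.Finite Λᵐᵒᵖ M)
    -- `T` and `F` are closed under isomorphisms
    (hTiso : ∀ ⦃M N : ModuleCat.{u} Λᵐᵒᵖ⦄, (M ≅ N) → M ∈ T → N ∈ T)
    (hFiso : ∀ ⦃M N : ModuleCat.{u} Λᵐᵒᵖ⦄, (M ≅ N) → M ∈ F → N ∈ F)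
    -- `Hom(T, F) = 0`
    (hHom : ∀ M ∈ T, ∀ N ∈ F, ∀ f : M →ₗ[Λᵐᵒᵖ] N, f = 0)
    -- every finite-dimensional module has a submodule in `T` with quotient in `F`
    (hTP : ∀ M : ModuleCat.{u} Λᵐᵒᵖ, Module.Finite Λᵐᵒᵖ M →
      ∃ N : Submodule Λᵐᵒᵖ M, ModuleCat.of Λᵐᵒᵖ N ∈ T ∧ ModuleCat.of Λᵐᵒᵖ (M ⧸ N) ∈ F) :
    -- (1): every extension of a module of `T` by a module of `F` splits, i.e.
    -- `Ext¹_Λ(T, F) = 0`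
    (∀ X ∈ T, ∀ Y ∈ F, ∀ (E : ModuleCat.{u} Λᵐᵒᵖ)
        (f : Y →ₗ[Λᵐᵒᵖ] E) (g : E →ₗ[Λᵐᵒᵖ] X),
        Function.Injective f → Function.Surjective g → Function.Exact f g →
        ∃ s : X →ₗ[Λᵐᵒᵖ] E, g ∘ₗ s = LinearMap.id)
    ↔
    -- (2): `T` is closed under submodules and `F` is closed under quotient modules
    ((∀ M ∈ T, ∀ N : Submodule Λᵐᵒᵖ M, ModuleCat.of Λᵐᵒᵖ N ∈ T) ∧
     (∀ M ∈ F, ∀ N : Submodule Λᵐᵒᵖ M, ModuleCat.of Λᵐᵒᵖ (M ⧸ N) ∈ F)) := by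
  have : IsNoetherianRing Λᵐᵒᵖ := IsNoetherianRing.of_finite k Λᵐᵒᵖ
  exact IsTorsionPair.extOneVanishes_iff ⟨hTfin, hFfin, hTiso, hFiso, hHom, hTP⟩
end
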